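/- arXiv:2503.22157 — 3 statements merged into one kernel-verified Lean document; each statement's English description precedes it below -/
import Mathlib

section
/- Let (g, [-,-], P) be a Nijenhuis Lie algebra and M a representation of (g, [-,-]) with action (a, x) ↦ a·x, equipped with a linear map P_M : M → M. Then the semi-direct product bracket [(a,x),(b,y)] := ([a,b], a·y - b·x) together with the operator (a,x) ↦ (P a, P_M x) defines a Nijenhuis Lie algebra structure on g ⊕ M if and only if P(a)·P_M(x) = P_M(P(a)·x + a·P_M(x) - P_M(a·x)) for all a ∈ g and x ∈ M. -/
/-!
Antisymmetry and the Jacobi identity of the semi-direct product hold for every representation.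
The `M`-component of the Nijenhuis identity at `(a, x)`, `(b, y)` is, by linearity of `P_M`, the
difference of the representation identities at `(a, y)` and at `(b, x)`; at `(a, 0)`, `(0, x)` it
is exactly the one at `(a, x)`.
-/

/-- The semi-direct product bracket on `g × M`:
`[(a,x),(b,y)] = ([a,b], a·y - b·x)`. -/
def sdBracket {g : Type*} [LieRing g]
    {M : Type*} [AddCommGroup M] [LieRingModule g M]
    (p q : g × M) : g × M :=
  (⁅p.1, q.1⁆, ⁅p.1, q.2⁆ - ⁅q.1, p.2⁆)

/-- The operator `(a,x) ↦ (P a, P_M x)` on `g × M`. -/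
def sdOp {k : Type*} [Field k] {g : Type*} [LieRing g] [LieAlgebra k g]
    {M : Type*} [AddCommGroup M] [Module k M]
    (P : g →ₗ[k] g) (PM : M →ₗ[k] M) (p : g × M) : g × M :=
  (P p.1, PM p.2)

section SemidirectBracket

variable {g : Type*} [LieRing g] {M : Type*} [AddCommGroup M] [LieRingModule g M]

theorem sdBracket_eq_neg_swap (u v : g × M) : sdBracket u v = -sdBracket v u := by
  ext
  · exact (lie_skew u.1 v.1).symm
  · exact (neg_sub _ _).symm

theorem sdBracket_leibniz (u v w : g × M) :
    sdBracket u (sdBracket v w) = sdBracket (sdBracket u v) w + sdBracket v (sdBracket u w) := by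
  ext
  · exact leibniz_lie u.1 v.1 w.1
  · simp only [sdBracket, Prod.snd_add, lie_sub, leibniz_lie u.1 v.1 w.2,
      leibniz_lie u.1 w.1 v.2, leibniz_lie v.1 w.1 u.2]
    abel

end SemidirectBracket

section SemidirectOperator

variable {k : Type*} [Field k] {g : Type*} [LieRing g] [LieAlgebra k g]
  {M : Type*} [AddCommGroup M] [Module k M] [LieRingModule g M]
  (P : g →ₗ[k] g) (PM : M →ₗ[k] M)

theorem sdOp_nijenhuis_inl_inr_iff (a : g) (x : M) :
    sdBracket (sdOp P PM (a, 0)) (sdOp P PM (0, x)) =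
        sdOp P PM (sdBracket (sdOp P PM (a, 0)) (0, x) + sdBracket (a, 0) (sdOp P PM (0, x))
          - sdOp P PM (sdBracket (a, 0) (0, x))) ↔
      ⁅P a, PM x⁆ = PM (⁅P a, x⁆ + ⁅a, PM x⁆ - PM ⁅a, x⁆) := by
  simp [sdBracket, sdOp, Prod.ext_iff]

theorem sdOp_nijenhuis
    (hP : ∀ a b : g, ⁅P a, P b⁆ = P (⁅P a, b⁆ + ⁅a, P b⁆ - P ⁅a, b⁆))
    (hM : ∀ (a : g) (x : M), ⁅P a, PM x⁆ = PM (⁅P a, x⁆ + ⁅a, PM x⁆ - PM ⁅a, x⁆))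
    (u v : g × M) :
    sdBracket (sdOp P PM u) (sdOp P PM v) =
      sdOp P PM (sdBracket (sdOp P PM u) v + sdBracket u (sdOp P PM v)
        - sdOp P PM (sdBracket u v)) := by
  ext
  · exact hP u.1 v.1
  · simp only [sdBracket, sdOp, Prod.fst_add, Prod.snd_add, Prod.fst_sub, Prod.snd_sub,
      hM u.1 v.2, hM v.1 u.2, map_add, map_sub]
    abel

end SemidirectOperator

theorem semidirect_nijenhuis_iff_general {k : Type*} [Field k]
    {g : Type*} [LieRing g] [LieAlgebra k g]
    {M : Type*} [AddCommGroup M] [Module k M] [LieRingModule g M]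
    (P : g →ₗ[k] g) (PM : M →ₗ[k] M)
    (hP : ∀ a b : g, ⁅P a, P b⁆ = P (⁅P a, b⁆ + ⁅a, P b⁆ - P ⁅a, b⁆)) :
    ((∀ u v : g × M, sdBracket u v = - sdBracket v u) ∧
     (∀ u v w : g × M,
        sdBracket u (sdBracket v w) =
          sdBracket (sdBracket u v) w + sdBracket v (sdBracket u w)) ∧
     (∀ u v : g × M,
        sdBracket (sdOp P PM u) (sdOp P PM v) =
          sdOp P PM (sdBracket (sdOp P PM u) v + sdBracket u (sdOp P PM v)
            - sdOp P PM (sdBracket u v))))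
    ↔ (∀ (a : g) (x : M), ⁅P a, PM x⁆ = PM (⁅P a, x⁆ + ⁅a, PM x⁆ - PM ⁅a, x⁆)) := by
  constructor
  · rintro ⟨-, -, hNijenhuis⟩ a x
    exact (sdOp_nijenhuis_inl_inr_iff P PM a x).mp (hNijenhuis (a, 0) (0, x))
  · intro hM
    exact ⟨sdBracket_eq_neg_swap, sdBracket_leibniz, sdOp_nijenhuis P PM hP hM⟩

/-- For a Nijenhuis Lie algebra `(g, [-,-], P)` and a representation `M` of `g`
equipped with a linear map `P_M`, the semi-direct product bracket together with the operator
`(a,x) ↦ (P a, P_M x)` defines a Nijenhuis Lie algebra structure on `g ⊕ M` if and only if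
`P(a)·P_M(x) = P_M(P(a)·x + a·P_M(x) - P_M(a·x))` for all `a ∈ g`, `x ∈ M`. -/
theorem semidirect_nijenhuis_iff {k : Type*} [Field k] [CharZero k]
    {g : Type*} [LieRing g] [LieAlgebra k g]
    {M : Type*} [AddCommGroup M] [Module k M] [LieRingModule g M] [LieModule k g M]
    (P : g →ₗ[k] g) (PM : M →ₗ[k] M)
    (hP : ∀ a b : g, ⁅P a, P b⁆ = P (⁅P a, b⁆ + ⁅a, P b⁆ - P ⁅a, b⁆)) :
    ((∀ u v : g × M, sdBracket u v = - sdBracket v u) ∧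
     (∀ u v w : g × M,
        sdBracket u (sdBracket v w) =
          sdBracket (sdBracket u v) w + sdBracket v (sdBracket u w)) ∧
     (∀ u v : g × M,
        sdBracket (sdOp P PM u) (sdOp P PM v) =
          sdOp P PM (sdBracket (sdOp P PM u) v + sdBracket u (sdOp P PM v)
            - sdOp P PM (sdBracket u v))))
    ↔ (∀ (a : g) (x : M), ⁅P a, PM x⁆ = PM (⁅P a, x⁆ + ⁅a, PM x⁆ - PM ⁅a, x⁆)) :=
  semidirect_nijenhuis_iff_general P PM hP
end

section
/- Let (g, [-,-], P) be a Nijenhuis Lie algebra and (M, P_M) a Nijenhuis representation over it. Define a new action of g on M by a ▷ x := P(a)·x. Then (M, ▷, P_M) is a Nijenhuis representation over the deformed Nijenhuis Lie algebra (g, [-,-]_P, P); in particular ▷ is a Lie algebra action of (g, [-,-]_P) on M and P([a]) ▷ P_M(x) = P_M(P(a) ▷ x + a ▷ P_M(x) - P_M(a ▷ x)). -/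
/-- The deformed bracket `[a,b]_P := [P a, b] + [a, P b] - P [a, b]`. -/
def njBracket {k : Type*} [Field k] {g : Type*} [LieRing g] [LieAlgebra k g]
    (P : g →ₗ[k] g) (a b : g) : g :=
  ⁅P a, b⁆ + ⁅a, P b⁆ - P ⁅a, b⁆

section NijenhuisOperator

variable {k : Type*} [Field k] {g : Type*} [LieRing g] [LieAlgebra k g] {P : g →ₗ[k] g}

theorem map_njBracket (hP : ∀ a b : g, ⁅P a, P b⁆ = P (⁅P a, b⁆ + ⁅a, P b⁆ - P ⁅a, b⁆))
    (a b : g) : P (njBracket P a b) = ⁅P a, P b⁆ :=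
  (hP a b).symm

/-- Since `P` maps `[-,-]_P` to `[-,-]`, pulling the `g`-action back along `P` gives an
action of `(g, [-,-]_P)`. -/
theorem lie_map_njBracket {M : Type*} [AddCommGroup M] [LieRingModule g M]
    (hP : ∀ a b : g, ⁅P a, P b⁆ = P (⁅P a, b⁆ + ⁅a, P b⁆ - P ⁅a, b⁆)) (a b : g) (x : M) :
    ⁅P (njBracket P a b), x⁆ = ⁅P a, ⁅P b, x⁆⁆ - ⁅P b, ⁅P a, x⁆⁆ := by
  rw [map_njBracket hP, lie_lie]

end NijenhuisOperator

theorem descendant_nijenhuis_representation_general {k : Type*} [Field k]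
    {g : Type*} [LieRing g] [LieAlgebra k g]
    {M : Type*} [AddCommGroup M] [Module k M] [LieRingModule g M] [LieModule k g M]
    (P : g →ₗ[k] g) (PM : M →ₗ[k] M)
    (hP : ∀ a b : g, ⁅P a, P b⁆ = P (⁅P a, b⁆ + ⁅a, P b⁆ - P ⁅a, b⁆))
    (hPM : ∀ (a : g) (x : M), ⁅P a, PM x⁆ = PM (⁅P a, x⁆ + ⁅a, PM x⁆ - PM ⁅a, x⁆)) :
    -- `a ▷ x := P(a)·x = ⁅P a, x⁆` is bilinear:
    (∀ (a b : g) (x : M), ⁅P (a + b), x⁆ = ⁅P a, x⁆ + ⁅P b, x⁆) ∧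
    (∀ (c : k) (a : g) (x : M), ⁅P (c • a), x⁆ = c • ⁅P a, x⁆) ∧
    (∀ (a : g) (x y : M), ⁅P a, x + y⁆ = ⁅P a, x⁆ + ⁅P a, y⁆) ∧
    (∀ (c : k) (a : g) (x : M), ⁅P a, c • x⁆ = c • ⁅P a, x⁆) ∧
    -- `▷` is a Lie algebra action of `(g, [-,-]_P)`:
    (∀ (a b : g) (x : M),
      ⁅P (njBracket P a b), x⁆ = ⁅P a, ⁅P b, x⁆⁆ - ⁅P b, ⁅P a, x⁆⁆) ∧
    -- the Nijenhuis representation condition for `(M, ▷, P_M)` over `(g, [-,-]_P, P)`: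
    (∀ (a : g) (x : M),
      ⁅P (P a), PM x⁆ = PM (⁅P (P a), x⁆ + ⁅P a, PM x⁆ - PM ⁅P a, x⁆)) :=
  ⟨fun a b x => by rw [map_add, add_lie],
    fun c a x => by rw [map_smul, smul_lie],
    fun _ => lie_add _,
    fun c a x => lie_smul c (P a) x,
    lie_map_njBracket hP,
    fun a => hPM (P a)⟩

/-- Let `(g, [-,-], P)` be a Nijenhuis Lie algebra and `(M, P_M)` a Nijenhuis
representation over it.  The new action `a ▷ x := P(a)·x` makes `(M, ▷, P_M)` into a
Nijenhuis representation over the deformed Nijenhuis Lie algebra `(g, [-,-]_P, P)`: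
`▷` is a (bilinear) Lie algebra action of `(g, [-,-]_P)` on `M`, and
`P(a) ▷ P_M(x) = P_M(P(a) ▷ x + a ▷ P_M(x) - P_M(a ▷ x))`. -/
theorem descendant_nijenhuis_representation {k : Type*} [Field k] [CharZero k]
    {g : Type*} [LieRing g] [LieAlgebra k g]
    {M : Type*} [AddCommGroup M] [Module k M] [LieRingModule g M] [LieModule k g M]
    (P : g →ₗ[k] g) (PM : M →ₗ[k] M)
    (hP : ∀ a b : g, ⁅P a, P b⁆ = P (⁅P a, b⁆ + ⁅a, P b⁆ - P ⁅a, b⁆))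
    (hPM : ∀ (a : g) (x : M), ⁅P a, PM x⁆ = PM (⁅P a, x⁆ + ⁅a, PM x⁆ - PM ⁅a, x⁆)) :
    -- `a ▷ x := P(a)·x = ⁅P a, x⁆` is bilinear:
    (∀ (a b : g) (x : M), ⁅P (a + b), x⁆ = ⁅P a, x⁆ + ⁅P b, x⁆) ∧
    (∀ (c : k) (a : g) (x : M), ⁅P (c • a), x⁆ = c • ⁅P a, x⁆) ∧
    (∀ (a : g) (x y : M), ⁅P a, x + y⁆ = ⁅P a, x⁆ + ⁅P a, y⁆) ∧
    (∀ (c : k) (a : g) (x : M), ⁅P a, c • x⁆ = c • ⁅P a, x⁆) ∧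
    -- `▷` is a Lie algebra action of `(g, [-,-]_P)`:
    (∀ (a b : g) (x : M),
      ⁅P (njBracket P a b), x⁆ = ⁅P a, ⁅P b, x⁆⁆ - ⁅P b, ⁅P a, x⁆⁆) ∧
    -- the Nijenhuis representation condition for `(M, ▷, P_M)` over `(g, [-,-]_P, P)`:
    (∀ (a : g) (x : M),
      ⁅P (P a), PM x⁆ = PM (⁅P (P a), x⁆ + ⁅P a, PM x⁆ - PM ⁅P a, x⁆)) :=
  descendant_nijenhuis_representation_general P PM hP hPM
end

section
/- Let (A, [-,-], ρ) be a Lie algebroid (Lie–Rinehart algebra over R = C^∞(M)) and P a Nijenhuis operator on A, i.e. a C^∞(M)-linear map with vanishing Nijenhuis torsion. Then the bracket [X,Y]^P := [P X, Y] + [X, P Y] - P[X,Y] together with the anchor ρ ∘ P defines a new Lie algebroid structure on A: [-,-]^P is a Lie bracket and satisfies [X, fY]^P = f[X,Y]^P + (ρ(P X) f) Y. -/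
/-!
Everything except the Jacobi identity is a direct expansion of the definition; for the new anchor
the term `(ρ X f) • P Y` produced by `⁅X, P (f • Y)⁆` cancels against the one from `P ⁅X, f • Y⁆`.

For the Jacobi identity, the Nijenhuis condition says exactly that `P` intertwines the brackets,
`P [X,Y]^P = ⁅P X, P Y⁆`. Using it, `[[X,Y]^P, Z]^P` expands into seven iterated brackets of the
original algebra. In the cyclic sum these regroup into Jacobi triples of `L`: with no `P` outside
the brackets and `P` on two of the three arguments, with `P` outside and `P` on one argument, and
with `P ∘ P` outside and none on the arguments.
-/

/-- The deformed bracket `[X,Y]^P := [P X, Y] + [X, P Y] - P [X,Y]`. -/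
def deformedBracket {R : Type*} [CommRing R] {L : Type*} [LieRing L] [Module R L]
    (P : L →ₗ[R] L) (X Y : L) : L :=
  ⁅P X, Y⁆ + ⁅X, P Y⁆ - P ⁅X, Y⁆

theorem lie_lie_add_lie_lie_add_lie_lie {L : Type*} [LieRing L] (a b c : L) :
    ⁅⁅a, b⁆, c⁆ + ⁅⁅b, c⁆, a⁆ + ⁅⁅c, a⁆, b⁆ = 0 := by
  rw [← lie_skew ⁅a, b⁆ c, ← lie_skew ⁅b, c⁆ a, ← lie_skew ⁅c, a⁆ b]
  linear_combination (norm := abel) -lie_jacobi a b c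

section DeformedBracket

variable {R : Type*} [CommRing R] {L : Type*} [LieRing L] [Module R L] (P : L →ₗ[R] L)

def IsNijenhuis : Prop :=
  ∀ X Y : L, ⁅P X, P Y⁆ = P ⁅P X, Y⁆ + P ⁅X, P Y⁆ - P (P ⁅X, Y⁆)

theorem deformedBracket_add_left (X X' Y : L) :
    deformedBracket P (X + X') Y = deformedBracket P X Y + deformedBracket P X' Y := by
  simp only [deformedBracket, map_add, add_lie]
  abel

theorem deformedBracket_add_right (X Y Y' : L) :
    deformedBracket P X (Y + Y') = deformedBracket P X Y + deformedBracket P X Y' := by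
  simp only [deformedBracket, map_add, lie_add]
  abel

theorem deformedBracket_skew (X Y : L) : deformedBracket P X Y = -deformedBracket P Y X := by
  simp only [deformedBracket]
  rw [← lie_skew Y X, ← lie_skew (P Y) X, ← lie_skew Y (P X), map_neg]
  abel

theorem deformedBracket_smul_right (ρ : L → R → R)
    (hleib : ∀ (X Y : L) (f : R), ⁅X, f • Y⁆ = f • ⁅X, Y⁆ + ρ X f • Y) (X Y : L) (f : R) :
    deformedBracket P X (f • Y) = f • deformedBracket P X Y + ρ (P X) f • Y := by
  simp only [deformedBracket, map_smul, hleib, map_add, smul_add, smul_sub]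
  abel

variable {P}

theorem IsNijenhuis.map_deformedBracket (hP : IsNijenhuis P) (X Y : L) :
    P (deformedBracket P X Y) = ⁅P X, P Y⁆ := by
  simp only [deformedBracket, map_sub, map_add]
  exact (hP X Y).symm

theorem IsNijenhuis.deformedBracket_deformedBracket (hP : IsNijenhuis P) (X Y Z : L) :
    deformedBracket P (deformedBracket P X Y) Z =
      ⁅⁅P X, P Y⁆, Z⁆ + ⁅⁅P X, Y⁆, P Z⁆ + ⁅⁅X, P Y⁆, P Z⁆
        - P ⁅⁅P X, Y⁆, Z⁆ - P ⁅⁅X, P Y⁆, Z⁆ - P ⁅⁅X, Y⁆, P Z⁆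
        + P (P ⁅⁅X, Y⁆, Z⁆) := by
  rw [deformedBracket, hP.map_deformedBracket]
  simp only [deformedBracket, add_lie, sub_lie, map_add, map_sub]
  rw [hP ⁅X, Y⁆ Z]
  abel

theorem IsNijenhuis.deformedBracket_jacobi (hP : IsNijenhuis P) (X Y Z : L) :
    deformedBracket P (deformedBracket P X Y) Z + deformedBracket P (deformedBracket P Y Z) X +
      deformedBracket P (deformedBracket P Z X) Y = 0 := by
  rw [hP.deformedBracket_deformedBracket X Y Z, hP.deformedBracket_deformedBracket Y Z X,
    hP.deformedBracket_deformedBracket Z X Y]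
  have jacobi := lie_lie_add_lie_lie_add_lie_lie (L := L)
  have map_jacobi (a b c : L) : P ⁅⁅a, b⁆, c⁆ + P ⁅⁅b, c⁆, a⁆ + P ⁅⁅c, a⁆, b⁆ = 0 := by
    rw [← map_add, ← map_add, jacobi, map_zero]
  have map_map_jacobi := congrArg P (map_jacobi X Y Z)
  rw [map_add, map_add, map_zero] at map_map_jacobi
  linear_combination (norm := abel)
    jacobi (P X) (P Y) Z + jacobi (P Y) (P Z) X + jacobi (P Z) (P X) Y
      - map_jacobi (P X) Y Z - map_jacobi X (P Y) Z - map_jacobi X Y (P Z) + map_map_jacobi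

end DeformedBracket

theorem deformed_lie_algebroid_general {R : Type*} [CommRing R]
    {L : Type*} [LieRing L] [Module R L]
    (ρ : L → R → R)
    -- Lie algebroid axioms:
    (hleib : ∀ (X Y : L) (f : R), ⁅X, f • Y⁆ = f • ⁅X, Y⁆ + ρ X f • Y)
    (P : L →ₗ[R] L)
    -- `P` is a Nijenhuis operator:
    (hNij : ∀ X Y : L, ⁅P X, P Y⁆ = P ⁅P X, Y⁆ + P ⁅X, P Y⁆ - P (P ⁅X, Y⁆)) :
    -- biadditivity:
    (∀ X X' Y : L, deformedBracket P (X + X') Y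
        = deformedBracket P X Y + deformedBracket P X' Y) ∧
    (∀ X Y Y' : L, deformedBracket P X (Y + Y')
        = deformedBracket P X Y + deformedBracket P X Y') ∧
    -- antisymmetry:
    (∀ X Y : L, deformedBracket P X Y = - deformedBracket P Y X) ∧
    -- Jacobi identity:
    (∀ X Y Z : L,
      deformedBracket P (deformedBracket P X Y) Z +
        deformedBracket P (deformedBracket P Y Z) X +
        deformedBracket P (deformedBracket P Z X) Y = 0) ∧
    -- Leibniz rule for the new anchor `ρ ∘ P`:
    (∀ (X Y : L) (f : R),
      deformedBracket P X (f • Y) = f • deformedBracket P X Y + ρ (P X) f • Y) :=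
  ⟨deformedBracket_add_left P, deformedBracket_add_right P, deformedBracket_skew P,
    IsNijenhuis.deformedBracket_jacobi hNij, deformedBracket_smul_right P ρ hleib⟩

/-- Let `(A, [-,-], ρ)` be a Lie algebroid over `R = C^∞(M)` and `P` a Nijenhuis
operator on it (a `C^∞(M)`-linear map with vanishing Nijenhuis torsion).  Then the bracket
`[X,Y]^P := [P X, Y] + [X, P Y] - P[X,Y]` together with the anchor `ρ ∘ P` defines a new Lie
algebroid structure: `[-,-]^P` is a Lie bracket and `[X, fY]^P = f [X,Y]^P + (ρ(P X) f) Y`. -/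
theorem deformed_lie_algebroid {R : Type*} [CommRing R]
    {L : Type*} [LieRing L] [Module R L]
    (ρ : L → R → R)
    -- Lie algebroid axioms:
    (hρ_addf : ∀ (X : L) (f g : R), ρ X (f + g) = ρ X f + ρ X g)
    (hρ_deriv : ∀ (X : L) (f g : R), ρ X (f * g) = ρ X f * g + f * ρ X g)
    (hρ_addX : ∀ (X Y : L) (f : R), ρ (X + Y) f = ρ X f + ρ Y f)
    (hρ_smulX : ∀ (f : R) (X : L) (g : R), ρ (f • X) g = f * ρ X g)
    (hρ_lie : ∀ (X Y : L) (f : R), ρ ⁅X, Y⁆ f = ρ X (ρ Y f) - ρ Y (ρ X f))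
    (hleib : ∀ (X Y : L) (f : R), ⁅X, f • Y⁆ = f • ⁅X, Y⁆ + ρ X f • Y)
    (P : L →ₗ[R] L)
    -- `P` is a Nijenhuis operator:
    (hNij : ∀ X Y : L, ⁅P X, P Y⁆ = P ⁅P X, Y⁆ + P ⁅X, P Y⁆ - P (P ⁅X, Y⁆)) :
    -- biadditivity:
    (∀ X X' Y : L, deformedBracket P (X + X') Y
        = deformedBracket P X Y + deformedBracket P X' Y) ∧
    (∀ X Y Y' : L, deformedBracket P X (Y + Y')
        = deformedBracket P X Y + deformedBracket P X Y') ∧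
    -- antisymmetry:
    (∀ X Y : L, deformedBracket P X Y = - deformedBracket P Y X) ∧
    -- Jacobi identity:
    (∀ X Y Z : L,
      deformedBracket P (deformedBracket P X Y) Z +
        deformedBracket P (deformedBracket P Y Z) X +
        deformedBracket P (deformedBracket P Z X) Y = 0) ∧
    -- Leibniz rule for the new anchor `ρ ∘ P`:
    (∀ (X Y : L) (f : R),
      deformedBracket P X (f • Y) = f • deformedBracket P X Y + ρ (P X) f • Y) :=
  deformed_lie_algebroid_general ρ hleib P hNij
end
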